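/- Under the LOLOHA generative model — V finite of size k, g ≥ 2, 0 < ε₁ < ε∞, ε_IRR = ln((e^{ε∞+ε₁}−1)/(e^{ε∞}−e^{ε₁})), p₁ = e^{ε∞}/(e^{ε∞}+g−1), q₁' = 1/g, p₂ = e^{ε_IRR}/(e^{ε_IRR}+g−1), q₂ = 1/(e^{ε_IRR}+g−1); n independent users, user u holding v_u ∈ V, sampling H_u uniformly from a pairwise-independent family ℋ of hash functions V → {1,…,g} and reporting x''_u = GRR(GRR(H_u(v_u); ε∞); ε_IRR) — the estimator f̂(v) = (C(v) − n·q₁'·(p₂−q₂) − n·q₂)/(n·(p₁−q₁')·(p₂−q₂)), with C(v) = |{u : H_u(v) = x''_u}|, satisfies Var[f̂(v)] ≤ 1/(4·n·(p₁−q₁')²·(p₂−q₂)²) for every v ∈ V. -/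

import Mathlib

noncomputable section

/-- One user's sample point in the LOLOHA generative model: the hash function,
the memoized PRR output, and the reported IRR output. -/
abbrev LolohaSample (V : Type) (g : ℕ) : Type := (V → Fin g) × Fin g × Fin g

/-- Probability weight of a joint outcome `ω` of `n` independent users, where user `u`
holds `vu u`, samples `H_u` uniformly from `ℋ`, memoizes `z_u = GRR(H_u(v_u); ε∞)`
(keep-probability `p₁`, switch-probability `q₁`) and reports
`x''_u = GRR(z_u; ε_IRR)` (probabilities `p₂`, `q₂`). -/
def lolohaWeight (V : Type) [Fintype V] [DecidableEq V] (g n : ℕ)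
    (ℋ : Finset (V → Fin g)) (p₁ q₁ p₂ q₂ : ℝ)
    (vu : Fin n → V) (ω : Fin n → LolohaSample V g) : ℝ :=
  ∏ u : Fin n,
    ((if (ω u).1 ∈ ℋ then (1 : ℝ) / ℋ.card else 0) *
     (if (ω u).2.1 = (ω u).1 (vu u) then p₁ else q₁) *
     (if (ω u).2.2 = (ω u).2.1 then p₂ else q₂))

/-- The server-side support count `C(v) = |{u : H_u(v) = x''_u}|`. -/
def lolohaCount (V : Type) [Fintype V] [DecidableEq V] (g n : ℕ)
    (v : V) (ω : Fin n → LolohaSample V g) : ℕ :=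
  (Finset.univ.filter fun u : Fin n => (ω u).1 v = (ω u).2.2).card

/-- The LOLOHA frequency estimator
`f̂(v) = (C(v) − n·q₁'·(p₂−q₂) − n·q₂) / (n·(p₁−q₁')·(p₂−q₂))`. -/
def lolohaEst (V : Type) [Fintype V] [DecidableEq V] (g n : ℕ)
    (p₁ q₁' p₂ q₂ : ℝ) (v : V) (ω : Fin n → LolohaSample V g) : ℝ :=
  ((lolohaCount V g n v ω : ℝ) - n * q₁' * (p₂ - q₂) - n * q₂) /
    (n * (p₁ - q₁') * (p₂ - q₂))

/-- The true frequency `f(v) = |{u : v_u = v}| / n`. -/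
def lolohaTrueFreq (V : Type) [DecidableEq V] (n : ℕ) (vu : Fin n → V) (v : V) : ℝ :=
  ((Finset.univ.filter fun u : Fin n => vu u = v).card : ℝ) / n

end

/-!
The support count `C(v)` is a sum of `n` indicators, one per user, and under the product
weight these are independent: each user's hash, PRR and IRR outputs are drawn independently of
the other users'. By Bienaymé the variance of `C(v)` is the sum of the users' Bernoulli
variances, each at most `1/4`, and `f̂(v)` is `C(v)` shifted and divided by
`n (p₁ - q₁') (p₂ - q₂)`.
-/

open Finset

section WeightedVariance

variable {Ω : Type*} [Fintype Ω]

def weightedMean (W Y : Ω → ℝ) : ℝ := ∑ ω, W ω * Y ω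

def weightedVar (W Y : Ω → ℝ) : ℝ := ∑ ω, W ω * (Y ω - weightedMean W Y) ^ 2

variable {W : Ω → ℝ}

lemma sum_mul_sub_weightedMean (hW : ∑ ω, W ω = 1) (Y : Ω → ℝ) :
    ∑ ω, W ω * (Y ω - weightedMean W Y) = 0 := by
  simp only [mul_sub, sum_sub_distrib, ← sum_mul, hW, one_mul, weightedMean, sub_self]

lemma weightedVar_sub_const (hW : ∑ ω, W ω = 1) (Y : Ω → ℝ) (c : ℝ) :
    weightedVar W (fun ω => Y ω - c) = weightedVar W Y := by
  have hmean : weightedMean W (fun ω => Y ω - c) = weightedMean W Y - c := by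
    simp only [weightedMean, mul_sub, sum_sub_distrib, ← sum_mul, hW, one_mul]
  simp only [weightedVar, hmean, sub_sub_sub_cancel_right]

lemma weightedVar_div_const (W Y : Ω → ℝ) (d : ℝ) :
    weightedVar W (fun ω => Y ω / d) = weightedVar W Y / d ^ 2 := by
  have hmean : weightedMean W (fun ω => Y ω / d) = weightedMean W Y / d := by
    simp only [weightedMean, mul_div_assoc', sum_div]
  simp only [weightedVar, hmean, ← sub_div, div_pow, mul_div_assoc', sum_div]

lemma weightedVar_indicator_le_one_div_four (hW : ∑ ω, W ω = 1) (P : Ω → Prop)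
    [DecidablePred P] :
    weightedVar W (fun ω => if P ω then 1 else 0) ≤ 1 / 4 := by
  set m := weightedMean W (fun ω => if P ω then 1 else 0)
  -- an indicator is its own square, so the variance is `m - m ^ 2`
  have hvar : weightedVar W (fun ω => if P ω then 1 else 0) = m - m ^ 2 := by
    have hsq : ∀ ω, W ω * ((if P ω then 1 else 0) - m) ^ 2
        = W ω * (if P ω then 1 else 0) * (1 - 2 * m) + m ^ 2 * W ω := by
      intro ω; split_ifs <;> ring
    rw [weightedVar, sum_congr rfl fun ω _ => hsq ω, sum_add_distrib, ← sum_mul, ← mul_sum, hW]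
    simp only [m, weightedMean]; ring
  rw [hvar]
  nlinarith [sq_nonneg (m - 1 / 2)]

end WeightedVariance

section ProductWeights

variable {ι S : Type*} [Fintype ι] [DecidableEq ι] [Fintype S] {w : ι → S → ℝ}

lemma sum_prod_mul_prod_eq_prod_sum (hw : ∀ i, ∑ s, w i s = 1)
    (f : ι → S → ℝ) (t : Finset ι) :
    ∑ ω : ι → S, (∏ i, w i (ω i)) * ∏ i ∈ t, f i (ω i) = ∏ i ∈ t, ∑ s, w i s * f i s := by
  have hsplit : ∀ ω : ι → S, (∏ i, w i (ω i)) * ∏ i ∈ t, f i (ω i)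
      = ∏ i, (w i (ω i) * if i ∈ t then f i (ω i) else 1) := by
    intro ω
    rw [prod_mul_distrib, prod_ite_mem, univ_inter]
  rw [sum_congr rfl fun ω _ => hsplit ω,
    ← Fintype.prod_sum (fun i s => w i s * if i ∈ t then f i s else 1), ← univ_inter t,
    ← prod_ite_mem]
  refine prod_congr rfl fun i _ => ?_
  by_cases hi : i ∈ t <;> simp [hi, hw]

lemma sum_prod_eq_one (hw : ∀ i, ∑ s, w i s = 1) : ∑ ω : ι → S, ∏ i, w i (ω i) = 1 := by
  simpa using sum_prod_mul_prod_eq_prod_sum hw 0 ∅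

lemma weightedVar_prod_sum (hw : ∀ i, ∑ s, w i s = 1) (X : ι → S → ℝ) :
    weightedVar (fun ω : ι → S => ∏ i, w i (ω i)) (fun ω => ∑ i, X i (ω i)) =
      ∑ i, weightedVar (w i) (X i) := by
  set m : ι → ℝ := fun i => weightedMean (w i) (X i)
  have hcoord : ∀ (j : ι) (c : S → ℝ),
      ∑ ω : ι → S, (∏ i, w i (ω i)) * c (ω j) = ∑ s, w j s * c s := by
    intro j c
    simpa using sum_prod_mul_prod_eq_prod_sum hw (fun _ => c) {j}
  have hmean : weightedMean (fun ω : ι → S => ∏ i, w i (ω i)) (fun ω => ∑ i, X i (ω i))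
      = ∑ i, m i := by
    simp only [weightedMean, mul_sum]
    rw [sum_comm]
    exact sum_congr rfl fun j _ => hcoord j (X j)
  have hcov : ∀ i j, ∑ ω : ι → S, (∏ k, w k (ω k)) * ((X i (ω i) - m i) * (X j (ω j) - m j))
      = if i = j then weightedVar (w i) (X i) else 0 := by
    intro i j
    split_ifs with hij
    · subst hij
      simpa [weightedVar, sq] using hcoord i (fun s => (X i s - m i) * (X i s - m i))
    · have := sum_prod_mul_prod_eq_prod_sum hw (fun k s => X k s - m k) {i, j}
      rw [prod_pair hij, sum_mul_sub_weightedMean (hw i), zero_mul] at this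
      simpa [prod_pair hij, mul_assoc] using this
  have hexpand : ∀ ω : ι → S, (∏ k, w k (ω k)) * (∑ i, X i (ω i) - ∑ i, m i) ^ 2
      = ∑ i, ∑ j, (∏ k, w k (ω k)) * ((X i (ω i) - m i) * (X j (ω j) - m j)) := by
    intro ω
    rw [← sum_sub_distrib, sq, sum_mul_sum, mul_sum]
    simp only [mul_sum]
  rw [weightedVar, hmean, sum_congr rfl fun ω _ => hexpand ω, sum_comm]
  refine sum_congr rfl fun i _ => ?_
  rw [sum_comm]
  simp only [hcov, sum_ite_eq, mem_univ, if_true]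

lemma weightedVar_prod_card_filter_le (hw : ∀ i, ∑ s, w i s = 1) (P : ι → S → Prop)
    [∀ i, DecidablePred (P i)] :
    weightedVar (fun ω : ι → S => ∏ i, w i (ω i)) (fun ω => (#{i | P i (ω i)} : ℝ)) ≤
      Fintype.card ι / 4 := by
  simp only [card_filter, Nat.cast_sum, Nat.cast_ite, Nat.cast_one, Nat.cast_zero]
  rw [weightedVar_prod_sum hw (fun i s => if P i s then 1 else 0)]
  calc ∑ i, weightedVar (w i) (fun s => if P i s then 1 else 0)
      ≤ ∑ _i : ι, (1 / 4 : ℝ) :=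
        sum_le_sum fun i _ => weightedVar_indicator_le_one_div_four (hw i) (P i)
    _ = Fintype.card ι / 4 := by simp [div_eq_mul_inv]

end ProductWeights

lemma sum_grr_eq_one {α : Type*} [Fintype α] [DecidableEq α] (ε : ℝ) (z : α) :
    ∑ x, (if x = z then Real.exp ε / (Real.exp ε + Fintype.card α - 1)
      else 1 / (Real.exp ε + Fintype.card α - 1)) = 1 := by
  have hcard : 1 ≤ Fintype.card α := Fintype.card_pos_iff.mpr ⟨z⟩
  have hpos : 0 < Real.exp ε + Fintype.card α - 1 := by
    have : (1 : ℝ) ≤ Fintype.card α := by exact_mod_cast hcard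
    linarith [Real.exp_pos ε]
  rw [Fintype.sum_eq_add_sum_compl z, if_pos rfl,
    sum_congr rfl fun x hx => if_neg (by simpa using hx), sum_const, card_compl, card_singleton,
    nsmul_eq_mul, Nat.cast_sub hcard, Nat.cast_one]
  field_simp
  ring

noncomputable def lolohaUserWeight (V : Type) [Fintype V] (g : ℕ) (ℋ : Finset (V → Fin g))
    (p₁ q₁ p₂ q₂ : ℝ) (y : V) (s : LolohaSample V g) : ℝ :=
  (if s.1 ∈ ℋ then (1 : ℝ) / ℋ.card else 0) *
    (if s.2.1 = s.1 y then p₁ else q₁) *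
    (if s.2.2 = s.2.1 then p₂ else q₂)

-- Unfolding `lolohaUserWeight` at a literal triple would leave `(H, z, x).1` inside the
-- decidability instances, where `simp` does not reduce it and `← mul_sum` then fails to fire.
lemma lolohaUserWeight_mk {V : Type} [Fintype V] {g : ℕ} {ℋ : Finset (V → Fin g)}
    {p₁ q₁ p₂ q₂ : ℝ} (y : V) (H : V → Fin g) (z x : Fin g) :
    lolohaUserWeight V g ℋ p₁ q₁ p₂ q₂ y (H, z, x) =
      (if H ∈ ℋ then (1 : ℝ) / ℋ.card else 0) * (if z = H y then p₁ else q₁) *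
        (if x = z then p₂ else q₂) :=
  rfl

lemma sum_lolohaUserWeight {V : Type} [Fintype V] [DecidableEq V] {g : ℕ} {ℋ : Finset (V → Fin g)}
    (hne : ℋ.Nonempty) {εinf εIRR p₁ q₁ p₂ q₂ : ℝ}
    (hp₁ : p₁ = Real.exp εinf / (Real.exp εinf + g - 1))
    (hq₁ : q₁ = 1 / (Real.exp εinf + g - 1))
    (hp₂ : p₂ = Real.exp εIRR / (Real.exp εIRR + g - 1))
    (hq₂ : q₂ = 1 / (Real.exp εIRR + g - 1)) (y : V) :
    ∑ s, lolohaUserWeight V g ℋ p₁ q₁ p₂ q₂ y s = 1 := by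
  have hPRR := sum_grr_eq_one (α := Fin g) εinf
  have hIRR := sum_grr_eq_one (α := Fin g) εIRR
  simp only [Fintype.card_fin, ← hp₁, ← hq₁, ← hp₂, ← hq₂] at hPRR hIRR
  simp only [Fintype.sum_prod_type, lolohaUserWeight_mk, ← mul_sum, hIRR, mul_one, hPRR]
  rw [sum_ite_mem, univ_inter, sum_const, nsmul_eq_mul, mul_one_div_cancel]
  exact_mod_cast hne.card_pos.ne'

theorem loloha_estimator_variance_le_general
    (V : Type) [Fintype V] [DecidableEq V] (g n : ℕ)
    (εinf : ℝ)
    (εIRR : ℝ)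
    (p₁ q₁ q₁' p₂ q₂ : ℝ)
    (hp₁ : p₁ = Real.exp εinf / (Real.exp εinf + g - 1))
    (hq₁ : q₁ = 1 / (Real.exp εinf + g - 1))
    (hp₂ : p₂ = Real.exp εIRR / (Real.exp εIRR + g - 1))
    (hq₂ : q₂ = 1 / (Real.exp εIRR + g - 1))
    (ℋ : Finset (V → Fin g)) (hne : ℋ.Nonempty)
    (vu : Fin n → V)
    (v : V) :
    ∑ ω : Fin n → LolohaSample V g,
        lolohaWeight V g n ℋ p₁ q₁ p₂ q₂ vu ω *
          (lolohaEst V g n p₁ q₁' p₂ q₂ v ω -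
            ∑ ω' : Fin n → LolohaSample V g,
              lolohaWeight V g n ℋ p₁ q₁ p₂ q₂ vu ω' *
                lolohaEst V g n p₁ q₁' p₂ q₂ v ω') ^ 2 ≤
      1 / (4 * n * (p₁ - q₁') ^ 2 * (p₂ - q₂) ^ 2) := by
  have hw : ∀ u, ∑ s, lolohaUserWeight V g ℋ p₁ q₁ p₂ q₂ (vu u) s = 1 :=
    fun u => sum_lolohaUserWeight hne hp₁ hq₁ hp₂ hq₂ (vu u)
  have hW : ∑ ω, lolohaWeight V g n ℋ p₁ q₁ p₂ q₂ vu ω = 1 := sum_prod_eq_one hw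
  change weightedVar (lolohaWeight V g n ℋ p₁ q₁ p₂ q₂ vu) (lolohaEst V g n p₁ q₁' p₂ q₂ v) ≤ _
  calc _ = weightedVar (lolohaWeight V g n ℋ p₁ q₁ p₂ q₂ vu)
          (fun ω => (lolohaCount V g n v ω : ℝ)) / (n * (p₁ - q₁') * (p₂ - q₂)) ^ 2 := by
        unfold lolohaEst
        rw [weightedVar_div_const, weightedVar_sub_const hW
          (fun ω => (lolohaCount V g n v ω : ℝ) - n * q₁' * (p₂ - q₂)), weightedVar_sub_const hW]
    _ ≤ n / 4 / (n * (p₁ - q₁') * (p₂ - q₂)) ^ 2 := by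
        gcongr
        have := weightedVar_prod_card_filter_le hw fun _ s => s.1 v = s.2.2
        rwa [Fintype.card_fin] at this
    _ = 1 / (4 * n * (p₁ - q₁') ^ 2 * (p₂ - q₂) ^ 2) := by
        rcases eq_or_ne (n : ℝ) 0 with hn | hn
        · simp [hn] -- both sides are `0` by the convention `x / 0 = 0`
        · rw [div_div, one_div, ← div_mul_cancel_left₀ hn]
          ring

/-- **Variance bound of the LOLOHA estimator** under the LOLOHA generative model:
`Var[f̂(v)] ≤ 1/(4·n·(p₁−q₁')²·(p₂−q₂)²)` for every `v`. -/
theorem loloha_estimator_variance_le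
    (V : Type) [Fintype V] [DecidableEq V] (k g n : ℕ)
    (hk : Fintype.card V = k) (hg : 2 ≤ g) (hn : 1 ≤ n)
    (ε₁ εinf : ℝ) (h₁ : 0 < ε₁) (h₂ : ε₁ < εinf)
    (εIRR : ℝ)
    (hεIRR : εIRR = Real.log ((Real.exp (εinf + ε₁) - 1) / (Real.exp εinf - Real.exp ε₁)))
    (p₁ q₁ q₁' p₂ q₂ : ℝ)
    (hp₁ : p₁ = Real.exp εinf / (Real.exp εinf + g - 1))
    (hq₁ : q₁ = 1 / (Real.exp εinf + g - 1))
    (hq₁' : q₁' = 1 / (g : ℝ))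
    (hp₂ : p₂ = Real.exp εIRR / (Real.exp εIRR + g - 1))
    (hq₂ : q₂ = 1 / (Real.exp εIRR + g - 1))
    (ℋ : Finset (V → Fin g)) (hne : ℋ.Nonempty)
    (hpi : ∀ v w : V, v ≠ w → ∀ a b : Fin g,
      (ℋ.filter fun H => H v = a ∧ H w = b).card * g ^ 2 = ℋ.card)
    (vu : Fin n → V)
    (v : V) :
    ∑ ω : Fin n → LolohaSample V g,
        lolohaWeight V g n ℋ p₁ q₁ p₂ q₂ vu ω *
          (lolohaEst V g n p₁ q₁' p₂ q₂ v ω -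
            ∑ ω' : Fin n → LolohaSample V g,
              lolohaWeight V g n ℋ p₁ q₁ p₂ q₂ vu ω' *
                lolohaEst V g n p₁ q₁' p₂ q₂ v ω') ^ 2 ≤
      1 / (4 * n * (p₁ - q₁') ^ 2 * (p₂ - q₂) ^ 2) :=
  loloha_estimator_variance_le_general V g n εinf εIRR p₁ q₁ q₁' p₂ q₂ hp₁ hq₁ hp₂ hq₂ ℋ hne vu v
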